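/- Let {x_k} be the RK iterates for the system Ãx ≈ b̃ with arbitrary initial point x_0 ∈ ℝⁿ. Then for every matrix A ∈ ℝ^{m×n} and every vector b ∈ ℝᵐ with b ∈ range(A) (so that Ax = b is consistent), setting x_LS = A†b, E = Ã − A and ε = b̃ − b, one has for every k ≥ 0: 𝔼‖x_k − x_0ⁿ − x_LSʳ‖² ≤ (1 − 1/R̃)^k ‖x_0ʳ − x_LSʳ‖² + ‖E x_LS − ε‖²/σ̃_min². -/

import Mathlib

/-!
Put `y = x₀ⁿ + x_LSʳ`. Each RK step moves along a row of `Ã`, so the error `x_k − y` stays in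
`range(Ãᵀ)`, where `‖Ãe‖ ≥ σ̃_min ‖e‖`. Averaging one step over the row choice gives
`𝔼‖x_{k+1} − y‖² ≤ ‖x_k − y‖² − ‖Ã(x_k − y)‖²/‖Ã‖_F² + ‖Ãy − b̃‖²/‖Ã‖_F²`, hence the contraction
`𝔼‖x_{k+1} − y‖² ≤ (1 − 1/R̃) ‖x_k − y‖² + ‖Ãy − b̃‖²/‖Ã‖_F²`, whose fixed point is
`‖Ãy − b̃‖²/σ̃_min²`. Finally `Ãy − b̃ = E x_LS − ε`, because `x₀ⁿ, x_LSⁿ ∈ null(Ã)` and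
`A x_LS = b` for a consistent system.
-/

open Matrix

noncomputable section

namespace RK

/-- The Euclidean inner product on `Fin n → ℝ`. -/
def dot {n : ℕ} (v w : Fin n → ℝ) : ℝ := ∑ i, v i * w i

/-- The squared Euclidean norm on `Fin n → ℝ`. -/
def normSq {n : ℕ} (v : Fin n → ℝ) : ℝ := ∑ i, v i ^ 2

/-- The Euclidean norm on `Fin n → ℝ`. -/
def euclNorm {n : ℕ} (v : Fin n → ℝ) : ℝ := Real.sqrt (normSq v)

/-- The squared Frobenius norm of a matrix. -/
def frobSq {m n : ℕ} (A : Matrix (Fin m) (Fin n) ℝ) : ℝ := ∑ i, ∑ j, A i j ^ 2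

/-- One step of the (randomized) Kaczmarz method for the system `A x ≈ b`, using row `i`:
`x ↦ x - ((aᵢᵀ x - bᵢ) / ‖aᵢ‖²) aᵢ`. -/
def rkStep {m n : ℕ} (A : Matrix (Fin m) (Fin n) ℝ) (b : Fin m → ℝ) (i : Fin m)
    (x : Fin n → ℝ) : Fin n → ℝ :=
  x - ((dot (A i) x - b i) / normSq (A i)) • A i

/-- `rkExp A b x0 k f` is the expectation `𝔼 f(x_k)` of `f` evaluated at the `k`-th iterate of the
randomized Kaczmarz algorithm applied to `A x ≈ b` started at `x0`, where at each step the row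
index `i` is drawn independently at random with probability `‖aᵢ‖² / ‖A‖_F²`. -/
def rkExp {m n : ℕ} (A : Matrix (Fin m) (Fin n) ℝ) (b : Fin m → ℝ) (x0 : Fin n → ℝ) :
    ℕ → ((Fin n → ℝ) → ℝ) → ℝ
  | 0, f => f x0
  | k + 1, f => rkExp A b x0 k fun x => ∑ i, normSq (A i) / frobSq A * f (rkStep A b i x)

/-- The four Penrose conditions: `B` is the Moore–Penrose pseudoinverse of `A`. -/
def IsMoorePenrose {m n : ℕ} (A : Matrix (Fin m) (Fin n) ℝ)
    (B : Matrix (Fin n) (Fin m) ℝ) : Prop :=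
  A * B * A = A ∧ B * A * B = B ∧ (A * B)ᵀ = A * B ∧ (B * A)ᵀ = B * A

/-- The row space `range(Aᵀ)` of a matrix `A`. -/
def rowSpace {m n : ℕ} (A : Matrix (Fin m) (Fin n) ℝ) : Set (Fin n → ℝ) :=
  {v | ∃ u : Fin m → ℝ, v = Aᵀ.mulVec u}

/-- The null space (kernel) of a matrix `A`. -/
def nullSpace {m n : ℕ} (A : Matrix (Fin m) (Fin n) ℝ) : Set (Fin n → ℝ) :=
  {v | A.mulVec v = 0}

/-- `σ` is the smallest nonzero singular value of `A`: `σ > 0`, `σ²` is an eigenvalue of `AᵀA`,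
and `σ²` is less than or equal to every nonzero eigenvalue of `AᵀA`. -/
def IsSmallestNonzeroSingularValue {m n : ℕ} (A : Matrix (Fin m) (Fin n) ℝ) (σ : ℝ) : Prop :=
  0 < σ ∧ (∃ v : Fin n → ℝ, v ≠ 0 ∧ (Aᵀ * A).mulVec v = σ ^ 2 • v) ∧
    ∀ μ : ℝ, μ ≠ 0 → (∃ v : Fin n → ℝ, v ≠ 0 ∧ (Aᵀ * A).mulVec v = μ • v) → σ ^ 2 ≤ μ

variable {m n : ℕ}

lemma normSq_eq_dotProduct (v : Fin n → ℝ) : normSq v = v ⬝ᵥ v := by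
  simp only [normSq, dotProduct, sq]

lemma normSq_nonneg (v : Fin n → ℝ) : 0 ≤ normSq v :=
  Finset.sum_nonneg fun _ _ => sq_nonneg _

lemma normSq_pos {v : Fin n → ℝ} (hv : v ≠ 0) : 0 < normSq v := by
  simpa [normSq_eq_dotProduct] using dotProduct_self_star_pos_iff.mpr hv

lemma normSq_mulVec (A : Matrix (Fin m) (Fin n) ℝ) (v : Fin n → ℝ) :
    normSq (A *ᵥ v) = v ⬝ᵥ (Aᵀ * A) *ᵥ v := by
  rw [normSq_eq_dotProduct, ← mulVec_mulVec, dotProduct_mulVec v Aᵀ, vecMul_transpose]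

lemma frobSq_eq_sum_normSq (A : Matrix (Fin m) (Fin n) ℝ) : frobSq A = ∑ i, normSq (A i) := rfl

lemma frobSq_nonneg (A : Matrix (Fin m) (Fin n) ℝ) : 0 ≤ frobSq A :=
  Finset.sum_nonneg fun i _ => normSq_nonneg (A i)

lemma normSq_mulVec_le_frobSq_mul (A : Matrix (Fin m) (Fin n) ℝ) (v : Fin n → ℝ) :
    normSq (A *ᵥ v) ≤ frobSq A * normSq v := by
  rw [frobSq_eq_sum_normSq, Finset.sum_mul]
  exact Finset.sum_le_sum fun i _ => Finset.sum_mul_sq_le_sq_mul_sq Finset.univ (A i) v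

lemma dotProduct_eq_zero_of_mem_rowSpace_of_mem_nullSpace {A : Matrix (Fin m) (Fin n) ℝ}
    {v w : Fin n → ℝ} (hv : v ∈ rowSpace A) (hw : w ∈ nullSpace A) : w ⬝ᵥ v = 0 := by
  obtain ⟨u, rfl⟩ := hv
  rw [dotProduct_mulVec, vecMul_transpose, hw, zero_dotProduct]

lemma sum_dotProduct_mul_dotProduct {ι : Type*} [Fintype ι]
    (B : OrthonormalBasis ι ℝ (EuclideanSpace ℝ ι)) (v w : ι → ℝ) :
    ∑ j, (⇑(B j) ⬝ᵥ v) * (⇑(B j) ⬝ᵥ w) = v ⬝ᵥ w := by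
  simpa [EuclideanSpace.inner_eq_star_dotProduct, dotProduct_comm] using
    B.sum_inner_mul_inner (WithLp.toLp 2 v) (WithLp.toLp 2 w)

lemma IsSmallestNonzeroSingularValue.sq_mul_normSq_le {A : Matrix (Fin m) (Fin n) ℝ} {σ : ℝ}
    (hσ : IsSmallestNonzeroSingularValue A σ) {v : Fin n → ℝ} (hv : v ∈ rowSpace A) :
    σ ^ 2 * normSq v ≤ normSq (A *ᵥ v) := by
  have hM : (Aᵀ * A).IsHermitian := by simpa using isHermitian_conjTranspose_mul_self A
  set B := hM.eigenvectorBasis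
  set eig := hM.eigenvalues
  have hB : ∀ j, (Aᵀ * A) *ᵥ ⇑(B j) = eig j • ⇑(B j) := hM.mulVec_eigenvectorBasis
  have hcoef : ∀ j, ⇑(B j) ⬝ᵥ (Aᵀ * A) *ᵥ v = eig j * (⇑(B j) ⬝ᵥ v) := fun j => by
    rw [dotProduct_mulVec, ← mulVec_transpose, transpose_mul, transpose_transpose, hB,
      smul_dotProduct, smul_eq_mul]
  have hker : ∀ j, eig j = 0 → ⇑(B j) ⬝ᵥ v = 0 := fun j hj => by
    have hAB : A *ᵥ ⇑(B j) = 0 := by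
      rw [← dotProduct_self_eq_zero, ← normSq_eq_dotProduct, normSq_mulVec, hB, hj, zero_smul,
        dotProduct_zero]
    exact dotProduct_eq_zero_of_mem_rowSpace_of_mem_nullSpace hv hAB
  have hgap : ∀ j, eig j ≠ 0 → σ ^ 2 ≤ eig j := fun j hj =>
    hσ.2.2 _ hj ⟨B j, fun h => B.orthonormal.ne_zero j (by simpa using h), hB j⟩
  calc σ ^ 2 * normSq v = ∑ j, σ ^ 2 * (⇑(B j) ⬝ᵥ v) ^ 2 := by
        rw [normSq_eq_dotProduct, ← sum_dotProduct_mul_dotProduct B, Finset.mul_sum]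
        simp only [sq]
    _ ≤ ∑ j, eig j * (⇑(B j) ⬝ᵥ v) ^ 2 := by
        refine Finset.sum_le_sum fun j _ => ?_
        by_cases hj : eig j = 0
        · simp [hj, hker j hj]
        · exact mul_le_mul_of_nonneg_right (hgap j hj) (sq_nonneg _)
    _ = normSq (A *ᵥ v) := by
        rw [normSq_mulVec, ← sum_dotProduct_mul_dotProduct B]
        exact Finset.sum_congr rfl fun j _ => by rw [hcoef]; ring

lemma IsSmallestNonzeroSingularValue.sq_le_frobSq {A : Matrix (Fin m) (Fin n) ℝ} {σ : ℝ}
    (hσ : IsSmallestNonzeroSingularValue A σ) : σ ^ 2 ≤ frobSq A := by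
  obtain ⟨-, ⟨v, hv0, hv⟩, -⟩ := hσ
  have hAv : normSq (A *ᵥ v) = σ ^ 2 * normSq v := by
    rw [normSq_mulVec, hv, dotProduct_smul, normSq_eq_dotProduct, smul_eq_mul]
  exact le_of_mul_le_mul_right (hAv ▸ normSq_mulVec_le_frobSq_mul A v) (normSq_pos hv0)

lemma rowSpace_eq_range (A : Matrix (Fin m) (Fin n) ℝ) :
    rowSpace A = LinearMap.range Aᵀ.mulVecLin := by
  ext v
  simp [rowSpace, eq_comm, mulVec_transpose]

lemma row_mem_rowSpace (A : Matrix (Fin m) (Fin n) ℝ) (i : Fin m) : A i ∈ rowSpace A :=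
  ⟨Pi.single i 1, by rw [mulVec_transpose, single_one_vecMul]; rfl⟩

lemma rkStep_sub_mem_rowSpace (A : Matrix (Fin m) (Fin n) ℝ) (b : Fin m → ℝ) (i : Fin m)
    {x y : Fin n → ℝ} (hxy : x - y ∈ rowSpace A) : rkStep A b i x - y ∈ rowSpace A := by
  have hrow := row_mem_rowSpace A i
  rw [rowSpace_eq_range] at *
  rw [rkStep, sub_right_comm]
  exact sub_mem hxy (Submodule.smul_mem _ _ hrow)

lemma normSq_sub_smul (e a : Fin n → ℝ) (t : ℝ) :
    normSq (e - t • a) = normSq e - 2 * t * (a ⬝ᵥ e) + t ^ 2 * normSq a := by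
  simp only [normSq_eq_dotProduct, sub_dotProduct, dotProduct_sub, smul_dotProduct,
    dotProduct_smul, smul_eq_mul, dotProduct_comm e a]
  ring

lemma rkStep_sub (A : Matrix (Fin m) (Fin n) ℝ) (b : Fin m → ℝ) (i : Fin m) (x y : Fin n → ℝ) :
    rkStep A b i x - y
      = (x - y) - (((A *ᵥ (x - y)) i + (A *ᵥ y - b) i) / normSq (A i)) • A i := by
  have hres : dot (A i) x - b i = (A *ᵥ (x - y)) i + (A *ᵥ y - b) i := by
    simp only [dot, Pi.sub_apply, mulVec, dotProduct, mul_sub, Finset.sum_sub_distrib]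
    ring
  rw [rkStep, hres, sub_right_comm]

/-- Equality holds when `A i ≠ 0`; a zero row leaves `x` unchanged. -/
lemma normSq_row_mul_normSq_rkStep_sub_le (A : Matrix (Fin m) (Fin n) ℝ) (b : Fin m → ℝ)
    (i : Fin m) (x y : Fin n → ℝ) :
    normSq (A i) * normSq (rkStep A b i x - y)
      ≤ normSq (A i) * normSq (x - y) + (A *ᵥ y - b) i ^ 2 - (A *ᵥ (x - y)) i ^ 2 := by
  have hd : (A *ᵥ (x - y)) i = A i ⬝ᵥ (x - y) := rfl
  by_cases hA : A i = 0
  · simp [hd, hA, normSq, sq_nonneg]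
  have hpos := normSq_pos hA
  rw [rkStep_sub, normSq_sub_smul, ← hd]
  field_simp
  exact le_of_eq (by ring)

lemma sum_normSq_rkStep_sub_le (A : Matrix (Fin m) (Fin n) ℝ) (b : Fin m → ℝ)
    (hF : frobSq A ≠ 0) (x y : Fin n → ℝ) :
    ∑ i, normSq (A i) / frobSq A * normSq (rkStep A b i x - y)
      ≤ normSq (x - y) - (normSq (A *ᵥ (x - y)) - normSq (A *ᵥ y - b)) / frobSq A := by
  have hF' : 0 < frobSq A := (frobSq_nonneg A).lt_of_ne' hF
  calc ∑ i, normSq (A i) / frobSq A * normSq (rkStep A b i x - y)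
      = (∑ i, normSq (A i) * normSq (rkStep A b i x - y)) / frobSq A := by
        rw [Finset.sum_div]
        exact Finset.sum_congr rfl fun i _ => div_mul_eq_mul_div _ _ _
    _ ≤ (∑ i, (normSq (A i) * normSq (x - y) + (A *ᵥ y - b) i ^ 2 - (A *ᵥ (x - y)) i ^ 2))
          / frobSq A := by
        gcongr with i
        exact normSq_row_mul_normSq_rkStep_sub_le A b i x y
    _ = (frobSq A * normSq (x - y) + normSq (A *ᵥ y - b) - normSq (A *ᵥ (x - y))) / frobSq A := by
        rw [Finset.sum_sub_distrib, Finset.sum_add_distrib, ← Finset.sum_mul,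
          ← frobSq_eq_sum_normSq]
        rfl
    _ = normSq (x - y) - (normSq (A *ᵥ (x - y)) - normSq (A *ᵥ y - b)) / frobSq A := by
        field_simp
        ring

lemma IsSmallestNonzeroSingularValue.sum_normSq_rkStep_sub_le {A : Matrix (Fin m) (Fin n) ℝ}
    {σ : ℝ} (hσ : IsSmallestNonzeroSingularValue A σ) (b : Fin m → ℝ) {x y : Fin n → ℝ}
    (hxy : x - y ∈ rowSpace A) :
    ∑ i, normSq (A i) / frobSq A * normSq (rkStep A b i x - y)
      ≤ (1 - σ ^ 2 / frobSq A) * normSq (x - y) + normSq (A *ᵥ y - b) / frobSq A := by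
  have hF : 0 < frobSq A := (pow_pos hσ.1 2).trans_le hσ.sq_le_frobSq
  have hgap : σ ^ 2 * normSq (x - y) / frobSq A ≤ normSq (A *ᵥ (x - y)) / frobSq A := by
    gcongr
    exact hσ.sq_mul_normSq_le hxy
  calc _ ≤ normSq (x - y) - (normSq (A *ᵥ (x - y)) - normSq (A *ᵥ y - b)) / frobSq A :=
        RK.sum_normSq_rkStep_sub_le A b hF.ne' x y
    _ ≤ _ := by
        rw [sub_div, one_sub_mul, div_mul_eq_mul_div]
        linarith

section rkExp

variable (A : Matrix (Fin m) (Fin n) ℝ) (b : Fin m → ℝ) (x₀ : Fin n → ℝ)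

lemma rkExp_mono_of_invariant (P : (Fin n → ℝ) → Prop) (hP : ∀ i x, P x → P (rkStep A b i x))
    (hx₀ : P x₀) (k : ℕ) {f g : (Fin n → ℝ) → ℝ} (hfg : ∀ x, P x → f x ≤ g x) :
    rkExp A b x₀ k f ≤ rkExp A b x₀ k g := by
  induction k generalizing f g with
  | zero => exact hfg x₀ hx₀
  | succ k ih =>
    refine ih fun x hx => Finset.sum_le_sum fun i _ => ?_
    exact mul_le_mul_of_nonneg_left (hfg _ (hP i x hx))
      (div_nonneg (normSq_nonneg _) (frobSq_nonneg A))

lemma rkExp_mul_add (hF : frobSq A ≠ 0) (k : ℕ) (f : (Fin n → ℝ) → ℝ) (c d : ℝ) :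
    rkExp A b x₀ k (fun x => c * f x + d) = c * rkExp A b x₀ k f + d := by
  have hprob : ∑ i, normSq (A i) / frobSq A = 1 := by
    rw [← Finset.sum_div, ← frobSq_eq_sum_normSq, div_self hF]
  induction k generalizing f with
  | zero => rfl
  | succ k ih =>
    simp only [rkExp, mul_add, Finset.sum_add_distrib, ← Finset.sum_mul, hprob, one_mul,
      mul_left_comm _ c, ← Finset.mul_sum]
    exact ih _

lemma rkExp_le_of_drift (hF : frobSq A ≠ 0) (P : (Fin n → ℝ) → Prop)
    (hP : ∀ i x, P x → P (rkStep A b i x)) (hx₀ : P x₀) (V : (Fin n → ℝ) → ℝ) {q c R : ℝ}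
    (hq : 0 ≤ q) (hR₀ : 0 ≤ R) (hR : q * R + c ≤ R)
    (hV : ∀ x, P x → ∑ i, normSq (A i) / frobSq A * V (rkStep A b i x) ≤ q * V x + c) (k : ℕ) :
    rkExp A b x₀ k V ≤ q ^ k * V x₀ + R := by
  induction k with
  | zero => simp only [rkExp, pow_zero, one_mul]; linarith
  | succ k ih =>
    calc rkExp A b x₀ (k + 1) V
        ≤ rkExp A b x₀ k (fun x => q * V x + c) := rkExp_mono_of_invariant A b x₀ P hP hx₀ k hV
      _ = q * rkExp A b x₀ k V + c := rkExp_mul_add A b x₀ hF k V q c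
      _ ≤ q * (q ^ k * V x₀ + R) + c := by gcongr
      _ ≤ q ^ (k + 1) * V x₀ + R := by rw [pow_succ]; linarith

end rkExp

lemma mulVec_mulVec_eq_of_mul_mul_eq {ι κ R : Type*} [Fintype ι] [Fintype κ] [CommSemiring R]
    {A : Matrix ι κ R} {B : Matrix κ ι R} (hB : A * B * A = A) {x : κ → R} {b : ι → R}
    (hx : A *ᵥ x = b) : A *ᵥ (B *ᵥ b) = b := by
  rw [← hx, mulVec_mulVec, mulVec_mulVec, hB]

theorem rk_reference_least_squares_of_consistent_general {m n : ℕ}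
    (At : Matrix (Fin m) (Fin n) ℝ) (bt : Fin m → ℝ)
    (σmin : ℝ) (hσ : IsSmallestNonzeroSingularValue At σmin)
    (x0 x0r x0n : Fin n → ℝ)
    (hx0r : x0r ∈ rowSpace At) (hx0n : x0n ∈ nullSpace At) (hx0 : x0 = x0r + x0n)
    (A : Matrix (Fin m) (Fin n) ℝ) (b : Fin m → ℝ)
    (hcons : ∃ x, A.mulVec x = b)
    (Ap : Matrix (Fin n) (Fin m) ℝ) (hAp : IsMoorePenrose A Ap)
    (xLSr xLSn : Fin n → ℝ)
    (hLSr : xLSr ∈ rowSpace At) (hLSn : xLSn ∈ nullSpace At)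
    (hLS : Ap.mulVec b = xLSr + xLSn)
    (k : ℕ) :
    rkExp At bt x0 k (fun x => normSq (x - x0n - xLSr)) ≤
      (1 - σmin ^ 2 / frobSq At) ^ k * normSq (x0r - xLSr)
        + normSq ((At - A).mulVec (Ap.mulVec b) - (bt - b)) / σmin ^ 2 := by
  set y := x0n + xLSr
  have hσ2 : 0 < σmin ^ 2 := pow_pos hσ.1 2
  have hF : 0 < frobSq At := hσ2.trans_le hσ.sq_le_frobSq
  have hx0y : x0 - y = x0r - xLSr := by simp only [y, hx0]; abel
  have hx0P : x0 - y ∈ rowSpace At := by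
    rw [hx0y]
    rw [rowSpace_eq_range] at hx0r hLSr ⊢
    exact sub_mem hx0r hLSr
  have hres : (At - A) *ᵥ (Ap *ᵥ b) - (bt - b) = At *ᵥ y - bt := by
    obtain ⟨x, hx⟩ := hcons
    rw [sub_mulVec, mulVec_mulVec_eq_of_mul_mul_eq hAp.1 hx, hLS, mulVec_add, hLSn, mulVec_add,
      hx0n]
    abel
  have hq : 0 ≤ 1 - σmin ^ 2 / frobSq At := sub_nonneg.2 ((div_le_one hF).2 hσ.sq_le_frobSq)
  have hfix : (1 - σmin ^ 2 / frobSq At) * (normSq (At *ᵥ y - bt) / σmin ^ 2)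
      + normSq (At *ᵥ y - bt) / frobSq At = normSq (At *ᵥ y - bt) / σmin ^ 2 := by
    field_simp [hσ.1.ne']
    ring
  simp only [sub_sub, hres, ← hx0y]
  exact rkExp_le_of_drift At bt x0 hF.ne' (fun x => x - y ∈ rowSpace At)
    (fun i _ hx => rkStep_sub_mem_rowSpace At bt i hx) hx0P _ hq
    (div_nonneg (normSq_nonneg _) hσ2.le) hfix.le (fun _ hx => hσ.sum_normSq_rkStep_sub_le bt hx) k

/-- **Theorem 2.1.** For the RK iterates of `Ãx ≈ b̃` with arbitrary initial point `x₀`, and any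
consistent system `Ax = b` with least squares solution `x_LS = A†b`, setting `E = Ã − A`,
`ε = b̃ − b`, one has
`𝔼‖x_k − x₀ⁿ − x_LSʳ‖² ≤ (1 − 1/R̃)^k ‖x₀ʳ − x_LSʳ‖² + ‖E x_LS − ε‖² / σ̃_min²`. -/
theorem rk_reference_least_squares_of_consistent {m n : ℕ}
    (At : Matrix (Fin m) (Fin n) ℝ) (bt : Fin m → ℝ)
    (hAt : At ≠ 0) (hrows : ∀ i, At i ≠ 0)
    (σmin : ℝ) (hσ : IsSmallestNonzeroSingularValue At σmin)
    (x0 x0r x0n : Fin n → ℝ)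
    (hx0r : x0r ∈ rowSpace At) (hx0n : x0n ∈ nullSpace At) (hx0 : x0 = x0r + x0n)
    (A : Matrix (Fin m) (Fin n) ℝ) (b : Fin m → ℝ)
    (hcons : ∃ x, A.mulVec x = b)
    (Ap : Matrix (Fin n) (Fin m) ℝ) (hAp : IsMoorePenrose A Ap)
    (xLSr xLSn : Fin n → ℝ)
    (hLSr : xLSr ∈ rowSpace At) (hLSn : xLSn ∈ nullSpace At)
    (hLS : Ap.mulVec b = xLSr + xLSn)
    (k : ℕ) :
    rkExp At bt x0 k (fun x => normSq (x - x0n - xLSr)) ≤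
      (1 - σmin ^ 2 / frobSq At) ^ k * normSq (x0r - xLSr)
        + normSq ((At - A).mulVec (Ap.mulVec b) - (bt - b)) / σmin ^ 2 :=
  rk_reference_least_squares_of_consistent_general At bt σmin hσ x0 x0r x0n hx0r hx0n hx0 A b hcons
    Ap hAp xLSr xLSn hLSr hLSn hLS k

end RK
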